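/- arXiv:2410.22540 — 2 statements merged into one kernel-verified Lean document; each statement's English description precedes it below -/
import Mathlib

section
/- (Monad associativity.) Let X, Y, Z be countable sets, g : X → C(Y), f : Y → C(Z). Then for every S ∈ C(X), (f† ∘ g)†(S) = f†(g†(S)), i.e., the Kleisli extension of the composite x ↦ f†(g(x)) applied to S equals the composition of the Kleisli extensions applied to S. -/
open scoped Classical
open Filter Topology

namespace DOL

/-- A discrete probability distribution on `X`: pointwise nonnegative with total mass 1. -/
def IsDist {X : Type*} (μ : X → ℝ) : Prop := (∀ x, 0 ≤ μ x) ∧ HasSum μ 1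

/-- The point-mass (Dirac) distribution at `x`. -/
noncomputable def dirac {X : Type*} (x : X) : X → ℝ := fun y => if y = x then 1 else 0

/-- The order `⊑_D` on distributions over `X_⊥ = Option X` (with `⊥ = none`):
pointwise comparison at proper states only. -/
def dle {X : Type*} (μ ν : Option X → ℝ) : Prop := ∀ x : X, μ (some x) ≤ ν (some x)

/-- Up-closure of a set of distributions over `X_⊥` (within `D(X_⊥)`). -/
def upClo {X : Type*} (S : Set (Option X → ℝ)) : Set (Option X → ℝ) :=
  {ν | IsDist ν ∧ ∃ μ ∈ S, dle μ ν}

/-- Convexity of a set of functions, with pointwise convex combinations. -/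
def IsConvexSet {X : Type*} (S : Set (X → ℝ)) : Prop :=
  ∀ μ ∈ S, ∀ ν ∈ S, ∀ p : ℝ, 0 ≤ p → p ≤ 1 →
    (fun x => p * μ x + (1 - p) * ν x) ∈ S

/-- Membership in `C(X)`: nonempty, consisting of distributions over `X_⊥`,
convex, (topologically) closed, and up-closed. -/
def memC {X : Type*} (S : Set (Option X → ℝ)) : Prop :=
  S.Nonempty ∧ (∀ μ ∈ S, IsDist μ) ∧ IsConvexSet S ∧ IsClosed S ∧ upClo S = S

/-- Bottom-lifting of a set-valued map: `f_⊥(⊥) = ↑{δ_⊥}`. -/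
noncomputable def fbot {X Y : Type*} (f : X → Set (Option Y → ℝ)) :
    Option X → Set (Option Y → ℝ) :=
  fun x => match x with
  | some x => f x
  | none => upClo {dirac (none : Option Y)}

/-- Kleisli extension: all convex mixtures `∑_{x ∈ supp μ} μ(x)·ν_x` with `μ ∈ S`
and `ν_x ∈ f_⊥(x)` on the support of `μ`. -/
noncomputable def kleisli {X Y : Type*} (f : X → Set (Option Y → ℝ))
    (S : Set (Option X → ℝ)) : Set (Option Y → ℝ) :=
  {ξ | ∃ μ ∈ S, ∃ ν : Option X → (Option Y → ℝ),
    (∀ x, 0 < μ x → ν x ∈ fbot f x) ∧ (∀ y, ξ y = ∑' x, μ x * ν x y)}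

/-- Probabilistic choice between sets of distributions. -/
def pchoice {X : Type*} (p : ℝ) (S T : Set (Option X → ℝ)) : Set (Option X → ℝ) :=
  {ξ | ∃ μ ∈ S, ∃ ν ∈ T, ξ = fun x => p * μ x + (1 - p) * ν x}

/-- The monad unit `η(x) = ↑{δ_x}`. -/
noncomputable def eta {X : Type*} (x : X) : Set (Option X → ℝ) := upClo {dirac (some x)}

/-- The loop characteristic functional. -/
noncomputable def Phi {St : Type*} (c : St → Set (Option St → ℝ)) (b : St → Bool)
    (f : St → Set (Option St → ℝ)) : St → Set (Option St → ℝ) :=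
  fun σ => if b σ then kleisli f (c σ) else upClo {dirac (some σ)}

/-! Both sides consist of iterated mixtures `∑ₓ μ(x) ∑_y σₓ(y) τ(y)`, and Fubini for nonnegative
series swaps the two sums. This already gives `⊇`. For `⊆` the choice `τₓ(y) ∈ f(y)` may depend
on `x`; it is replaced by the average `τ'(y) = ∑ₓ μ(x) σₓ(y) τₓ(y) / μ'(y)` with respect to the
intermediate distribution `μ' = ∑ₓ μ(x) σₓ`, which lies in `f(y)` because a closed convex set of
distributions is closed under countable convex combinations. At `⊥` every set involved is the set
of all distributions, and `f†` maps that set onto itself. -/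

section Mixtures

variable {α β γ : Type*}

noncomputable def mix (μ : α → ℝ) (ν : α → β → ℝ) : β → ℝ := fun b => ∑' a, μ a * ν a b

/-- The Kleisli extension of a map already defined at `⊥`: `kleisli f = mixtures (fbot f)`. -/
def mixtures (F : α → Set (β → ℝ)) (S : Set (α → ℝ)) : Set (β → ℝ) :=
  {ξ | ∃ μ ∈ S, ∃ ν : α → β → ℝ, (∀ a, 0 < μ a → ν a ∈ F a) ∧ ∀ b, ξ b = ∑' a, μ a * ν a b}

def IsSigmaConvex (ι : Type*) (C : Set (α → ℝ)) : Prop :=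
  ∀ w : ι → ℝ, IsDist w → ∀ p : ι → α → ℝ, (∀ i, p i ∈ C) → mix w p ∈ C

lemma IsDist.apply_mem_Icc {μ : α → ℝ} (hμ : IsDist μ) (a : α) : μ a ∈ Set.Icc (0 : ℝ) 1 :=
  ⟨hμ.1 a, le_hasSum hμ.2 a fun b _ => hμ.1 b⟩

lemma isDist_dirac (a : α) : IsDist (dirac a) :=
  ⟨fun b => by unfold dirac; split_ifs <;> norm_num, hasSum_ite_eq a 1⟩

lemma IsDist.summable_mul {μ : α → ℝ} (hμ : IsDist μ) {c : α → ℝ}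
    (hc : ∀ a, c a ∈ Set.Icc (0 : ℝ) 1) : Summable fun a => μ a * c a :=
  hμ.2.summable.of_nonneg_of_le (fun a => mul_nonneg (hμ.1 a) (hc a).1)
    fun a => mul_le_of_le_one_right (hμ.1 a) (hc a).2

lemma IsDist.tsum_mul_mem_Icc {μ : α → ℝ} (hμ : IsDist μ) {c : α → ℝ}
    (hc : ∀ a, c a ∈ Set.Icc (0 : ℝ) 1) : ∑' a, μ a * c a ∈ Set.Icc (0 : ℝ) 1 :=
  ⟨tsum_nonneg fun a => mul_nonneg (hμ.1 a) (hc a).1,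
    ((hμ.summable_mul hc).tsum_le_tsum (fun a => mul_le_of_le_one_right (hμ.1 a) (hc a).2)
      hμ.2.summable).trans_eq hμ.2.tsum_eq⟩

lemma hasSum_tsum_swap_of_nonneg {f : α → β → ℝ} (hf : ∀ a b, 0 ≤ f a b) {r : α → ℝ}
    (hr : ∀ a, HasSum (f a) (r a)) {s : ℝ} (hs : HasSum r s) :
    HasSum (fun b => ∑' a, f a b) s := by
  have hsum : Summable (Function.uncurry f) :=
    (summable_prod_of_nonneg fun p => hf p.1 p.2).2
      ⟨fun a => (hr a).summable, hs.summable.congr fun a => (hr a).tsum_eq.symm⟩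
  have hcomm : ∑' b, ∑' a, f a b = s := by
    rw [hsum.tsum_comm, ← hs.tsum_eq]
    exact tsum_congr fun a => (hr a).tsum_eq
  exact hcomm ▸ (hsum.prod_symm.prod : Summable fun b => ∑' a, f a b).hasSum

lemma tsum_mul_tsum_comm {μ : α → ℝ} (hμ : IsDist μ) {σ : α → β → ℝ} (hσ : ∀ a, IsDist (σ a))
    {c : α → β → ℝ} (hc : ∀ a b, c a b ∈ Set.Icc (0 : ℝ) 1) :
    ∑' a, μ a * ∑' b, σ a b * c a b = ∑' b, ∑' a, μ a * σ a b * c a b := by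
  refine (hasSum_tsum_swap_of_nonneg (r := fun a => μ a * ∑' b, σ a b * c a b)
    (fun a b => mul_nonneg (mul_nonneg (hμ.1 a) ((hσ a).1 b)) (hc a b).1) (fun a => ?_)
    (hμ.summable_mul fun a => (hσ a).tsum_mul_mem_Icc (hc a)).hasSum).tsum_eq.symm
  simpa only [mul_assoc] using ((hσ a).summable_mul (hc a)).hasSum.mul_left (μ a)

lemma isDist_mix {w : α → ℝ} (hw : IsDist w) {p : α → β → ℝ} (hp : ∀ a, IsDist (p a)) :
    IsDist (mix w p) :=
  ⟨fun b => tsum_nonneg fun a => mul_nonneg (hw.1 a) ((hp a).1 b),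
    hasSum_tsum_swap_of_nonneg (fun a b => mul_nonneg (hw.1 a) ((hp a).1 b))
      (fun a => by simpa only [mul_one] using (hp a).2.mul_left (w a)) hw.2⟩

lemma mix_mix {μ : α → ℝ} (hμ : IsDist μ) {σ : α → β → ℝ} (hσ : ∀ a, IsDist (σ a))
    {τ : β → γ → ℝ} (hτ : ∀ b, IsDist (τ b)) :
    mix μ (fun a => mix (σ a) τ) = mix (mix μ σ) τ :=
  funext fun z => (tsum_mul_tsum_comm hμ hσ fun _ b => (hτ b).apply_mem_Icc z).trans
    (tsum_congr fun _ => tsum_mul_right)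

lemma IsConvexSet.convex {C : Set (α → ℝ)} (h : IsConvexSet C) : Convex ℝ C := by
  intro μ hμ ν hν a b ha hb hab
  obtain rfl : b = 1 - a := by linarith
  exact h μ hμ ν hν a ha (by linarith)

lemma isSigmaConvex_setOf_isDist (ι : Type*) : IsSigmaConvex ι {μ : α → ℝ | IsDist μ} :=
  fun _ hw _ hp => isDist_mix hw hp

lemma IsConvexSet.isSigmaConvex (ι : Type*) {C : Set (α → ℝ)} (hconv : IsConvexSet C)
    (hC : IsClosed C) (hne : C.Nonempty) (hd : ∀ μ ∈ C, IsDist μ) : IsSigmaConvex ι C := by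
  intro w hw p hp
  obtain ⟨q, hq⟩ := hne
  -- finite partial mixtures, with the missing mass put on `q`
  let approx : Finset ι → α → ℝ := fun s z => ∑ i ∈ s, w i * p i z + (1 - ∑ i ∈ s, w i) * q z
  have happrox : ∀ s, approx s ∈ C := by
    intro s
    have hle : ∑ i ∈ s, w i ≤ 1 := sum_le_hasSum s (fun i _ => hw.1 i) hw.2
    convert hconv.convex.sum_mem (t := Finset.insertNone s)
      (w := fun j => j.elim (1 - ∑ i ∈ s, w i) w) (z := fun j => j.elim q p)
      (fun j _ => by cases j; exacts [sub_nonneg.2 hle, hw.1 _])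
      (by simp [Finset.sum_insertNone]) (fun j _ => by cases j; exacts [hq, hp _]) using 1
    funext z
    simp [approx, Finset.sum_insertNone, Finset.sum_apply]
    ring
  have htendsto : Tendsto approx atTop (𝓝 (mix w p)) := by
    refine tendsto_pi_nhds.2 fun z => ?_
    have hpart : Tendsto (fun s : Finset ι => ∑ i ∈ s, w i * p i z) atTop (𝓝 (mix w p z)) :=
      (hw.summable_mul fun i => (hd _ (hp i)).apply_mem_Icc z).hasSum
    have hrest : Tendsto (fun s : Finset ι => (1 - ∑ i ∈ s, w i) * q z) atTop (𝓝 0) := by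
      simpa using ((tendsto_const_nhds (x := (1 : ℝ))).sub hw.2).mul_const (q z)
    simpa using hpart.add hrest
  exact hC.mem_of_tendsto htendsto (Eventually.of_forall happrox)

lemma IsSigmaConvex.exists_mem_mul_eq_tsum {C : Set (β → ℝ)} (hC : IsSigmaConvex α C)
    (hne : C.Nonempty) {v : α → ℝ} (hv0 : ∀ a, 0 ≤ v a) {s : ℝ} (hv : HasSum v s)
    {p : α → β → ℝ} (hp : ∀ a, p a ∈ C) : ∃ q ∈ C, ∀ z, s * q z = ∑' a, v a * p a z := by
  rcases (hv.nonneg hv0).lt_or_eq with hs | rfl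
  · refine ⟨mix (fun a => v a / s) p, hC _ ⟨fun a => div_nonneg (hv0 a) hs.le, ?_⟩ p hp,
      fun z => ?_⟩
    · simpa [div_self hs.ne'] using hv.div_const s
    · rw [mix, ← tsum_mul_left]
      exact tsum_congr fun a => by field_simp
  · obtain ⟨q, hq⟩ := hne
    refine ⟨q, hq, fun z => ?_⟩
    simp [(hasSum_zero_iff_of_nonneg hv0).1 hv]

lemma mix_mem_mixtures {F : α → Set (β → ℝ)} {S : Set (α → ℝ)} {μ : α → ℝ} (hμ : μ ∈ S)
    {ν : α → β → ℝ} (hν : ∀ a, ν a ∈ F a) : mix μ ν ∈ mixtures F S :=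
  ⟨μ, hμ, ν, fun a _ => hν a, fun _ => rfl⟩

lemma mem_mixtures_iff {F : α → Set (β → ℝ)} {S : Set (α → ℝ)} (hS : ∀ μ ∈ S, 0 ≤ μ)
    (hF : ∀ a, (F a).Nonempty) {ξ : β → ℝ} :
    ξ ∈ mixtures F S ↔ ∃ μ ∈ S, ∃ ν : α → β → ℝ, (∀ a, ν a ∈ F a) ∧ ξ = mix μ ν := by
  refine ⟨fun ⟨μ, hμ, ν, hν, hξ⟩ => ?_, fun ⟨μ, hμ, ν, hν, hξ⟩ => hξ ▸ mix_mem_mixtures hμ hν⟩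
  choose d hd using hF
  refine ⟨μ, hμ, fun a => if 0 < μ a then ν a else d a, fun a => ?_, funext fun b => ?_⟩
  · dsimp only
    split_ifs with ha
    exacts [hν a ha, hd a]
  · rw [hξ, mix]
    refine tsum_congr fun a => ?_
    split_ifs with ha
    · rfl
    · simp [le_antisymm (not_lt.1 ha) (hS μ hμ a)]

lemma mixtures_nonempty {F : α → Set (β → ℝ)} {S : Set (α → ℝ)} (hS : S.Nonempty)
    (hF : ∀ a, (F a).Nonempty) : (mixtures F S).Nonempty := by
  choose d hd using hF
  obtain ⟨μ, hμ⟩ := hS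
  exact ⟨mix μ d, mix_mem_mixtures hμ hd⟩

lemma mixtures_subset_setOf_isDist {F : α → Set (β → ℝ)} {S : Set (α → ℝ)}
    (hS : ∀ μ ∈ S, IsDist μ) (hF : ∀ a, ∀ ν ∈ F a, IsDist ν) (hFne : ∀ a, (F a).Nonempty) :
    mixtures F S ⊆ {ν | IsDist ν} := by
  intro ξ hξ
  obtain ⟨μ, hμ, ν, hν, rfl⟩ := (mem_mixtures_iff (fun μ h => (hS μ h).1) hFne).1 hξ
  exact isDist_mix (hS μ hμ) fun a => hF a _ (hν a)

lemma mixtures_setOf_isDist {F : α → Set (β → ℝ)} (hF : ∀ a, ∀ ν ∈ F a, IsDist ν)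
    (hFne : ∀ a, (F a).Nonempty) {a₀ : α} (ha₀ : F a₀ = {ν | IsDist ν}) :
    mixtures F {μ | IsDist μ} = {ν | IsDist ν} := by
  refine (mixtures_subset_setOf_isDist (fun _ h => h) hF hFne).antisymm fun ρ hρ => ?_
  refine ⟨dirac a₀, isDist_dirac a₀, fun _ => ρ, fun a ha => ?_, fun z => ?_⟩
  · obtain rfl : a = a₀ := by_contra fun h => by simp [dirac, h] at ha
    exact ha₀ ▸ hρ
  · rw [tsum_mul_right, (isDist_dirac a₀).2.tsum_eq, one_mul]

theorem subset_mixtures_mixtures {S : Set (α → ℝ)} {G : α → Set (β → ℝ)}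
    {F : β → Set (γ → ℝ)} (hS : ∀ μ ∈ S, IsDist μ) (hG : ∀ a, ∀ σ ∈ G a, IsDist σ)
    (hGne : ∀ a, (G a).Nonempty) (hF : ∀ b, ∀ τ ∈ F b, IsDist τ) (hFne : ∀ b, (F b).Nonempty) :
    mixtures F (mixtures G S) ⊆ mixtures (fun a => mixtures F (G a)) S := by
  intro ξ hξ
  obtain ⟨μ', hμ', τ, hτ, rfl⟩ := (mem_mixtures_iff
    (fun μ' h => (mixtures_subset_setOf_isDist hS hG hGne h).1) hFne).1 hξ
  obtain ⟨μ, hμ, σ, hσ, rfl⟩ := (mem_mixtures_iff (fun μ h => (hS μ h).1) hGne).1 hμ'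
  rw [← mix_mix (hS μ hμ) (fun a => hG a _ (hσ a)) fun b => hF b _ (hτ b)]
  exact mix_mem_mixtures hμ fun a => mix_mem_mixtures (hσ a) hτ

theorem mixtures_mixtures_subset {S : Set (α → ℝ)} {G : α → Set (β → ℝ)}
    {F : β → Set (γ → ℝ)} (hS : ∀ μ ∈ S, IsDist μ) (hG : ∀ a, ∀ σ ∈ G a, IsDist σ)
    (hGne : ∀ a, (G a).Nonempty) (hF : ∀ b, ∀ τ ∈ F b, IsDist τ) (hFne : ∀ b, (F b).Nonempty)
    (hFσ : ∀ b, IsSigmaConvex α (F b)) :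
    mixtures (fun a => mixtures F (G a)) S ⊆ mixtures F (mixtures G S) := by
  intro ξ hξ
  obtain ⟨μ, hμ, ν, hν, rfl⟩ := (mem_mixtures_iff (fun μ h => (hS μ h).1)
    fun a => mixtures_nonempty (hGne a) hFne).1 hξ
  choose σ hσ τ hτ hντ using fun a =>
    (mem_mixtures_iff (fun σ h => (hG a σ h).1) hFne).1 (hν a)
  obtain rfl : ν = fun a => mix (σ a) (τ a) := funext hντ
  have hμd := hS μ hμ
  have hσd a := hG a _ (hσ a)
  choose τ' hτ' hττ' using fun b => (hFσ b).exists_mem_mul_eq_tsum (hFne b)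
    (fun a => mul_nonneg (hμd.1 a) ((hσd a).1 b))
    (hμd.summable_mul fun a => (hσd a).apply_mem_Icc b).hasSum fun a => hτ a b
  refine (mem_mixtures_iff (fun μ' h => (mixtures_subset_setOf_isDist hS hG hGne h).1)
    hFne).2 ⟨mix μ σ, mix_mem_mixtures hμ hσ, τ', hτ', funext fun z => ?_⟩
  calc mix μ (fun a => mix (σ a) (τ a)) z
      = ∑' b, ∑' a, μ a * σ a b * τ a b z :=
        tsum_mul_tsum_comm hμd hσd fun a b => (hF b _ (hτ a b)).apply_mem_Icc z
    _ = mix (mix μ σ) τ' z := tsum_congr fun b => (hττ' b z).symm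

theorem mixtures_assoc {S : Set (α → ℝ)} {G : α → Set (β → ℝ)} {F : β → Set (γ → ℝ)}
    (hS : ∀ μ ∈ S, IsDist μ) (hG : ∀ a, ∀ σ ∈ G a, IsDist σ) (hGne : ∀ a, (G a).Nonempty)
    (hF : ∀ b, ∀ τ ∈ F b, IsDist τ) (hFne : ∀ b, (F b).Nonempty)
    (hFσ : ∀ b, IsSigmaConvex α (F b)) :
    mixtures (fun a => mixtures F (G a)) S = mixtures F (mixtures G S) :=
  (mixtures_mixtures_subset hS hG hGne hF hFne hFσ).antisymm
    (subset_mixtures_mixtures hS hG hGne hF hFne)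

end Mixtures

section Bottom

variable {X Y Z : Type*}

lemma fbot_none (f : X → Set (Option Y → ℝ)) : fbot f none = {ν | IsDist ν} := by
  refine Set.Subset.antisymm (fun ν h => h.1) fun ν hν => ⟨hν, dirac none, rfl, fun y => ?_⟩
  simpa [dirac] using hν.1 (some y)

lemma isDist_of_mem_fbot {f : X → Set (Option Y → ℝ)} (hf : ∀ x, ∀ ν ∈ f x, IsDist ν) :
    ∀ x, ∀ ν ∈ fbot f x, IsDist ν
  | none => by simp [fbot_none]
  | some x => hf x

lemma fbot_nonempty {f : X → Set (Option Y → ℝ)} (hf : ∀ x, (f x).Nonempty) :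
    ∀ x, (fbot f x).Nonempty
  | none => ⟨dirac none, by simpa [fbot_none] using isDist_dirac _⟩
  | some x => hf x

lemma isSigmaConvex_fbot (ι : Type*) {f : X → Set (Option Y → ℝ)} (hf : ∀ x, memC (f x)) :
    ∀ x, IsSigmaConvex ι (fbot f x)
  | none => fbot_none f ▸ isSigmaConvex_setOf_isDist ι
  | some x => (hf x).2.2.1.isSigmaConvex ι (hf x).2.2.2.1 (hf x).1 (hf x).2.1

lemma fbot_kleisli {f : Y → Set (Option Z → ℝ)} (hf : ∀ y, ∀ ν ∈ f y, IsDist ν)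
    (hfne : ∀ y, (f y).Nonempty) (g : X → Set (Option Y → ℝ)) :
    fbot (fun x => kleisli f (g x)) = fun x => mixtures (fbot f) (fbot g x) := by
  funext x
  cases x with
  | none =>
    rw [fbot_none, fbot_none]
    exact (mixtures_setOf_isDist (isDist_of_mem_fbot hf) (fbot_nonempty hfne) (fbot_none f)).symm
  | some x => rfl

end Bottom

theorem kleisli_assoc_general {X Y Z : Type*}
    (g : X → Set (Option Y → ℝ)) (hg : ∀ x, memC (g x))
    (f : Y → Set (Option Z → ℝ)) (hf : ∀ y, memC (f y))
    (S : Set (Option X → ℝ)) (hS : memC S) :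
    kleisli (fun x : X => kleisli f (g x)) S = kleisli f (kleisli g S) := by
  show mixtures (fbot fun x => kleisli f (g x)) S = mixtures (fbot f) (mixtures (fbot g) S)
  rw [fbot_kleisli (fun y => (hf y).2.1) (fun y => (hf y).1) g]
  exact mixtures_assoc hS.2.1 (isDist_of_mem_fbot fun x => (hg x).2.1)
    (fbot_nonempty fun x => (hg x).1) (isDist_of_mem_fbot fun y => (hf y).2.1)
    (fbot_nonempty fun y => (hf y).1) (isSigmaConvex_fbot _ hf)

/-- monad associativity: `(f† ∘ g)†(S) = f†(g†(S))`. -/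
theorem kleisli_assoc {X Y Z : Type*} [Countable X] [Countable Y] [Countable Z]
    (g : X → Set (Option Y → ℝ)) (hg : ∀ x, memC (g x))
    (f : Y → Set (Option Z → ℝ)) (hf : ∀ y, memC (f y))
    (S : Set (Option X → ℝ)) (hS : memC S) :
    kleisli (fun x : X => kleisli f (g x)) S = kleisli f (kleisli g S) :=
  kleisli_assoc_general g hg f hf S hS

end DOL
end

section
/- (Scott continuity of the loop characteristic functional.) Let Σ be a countable set, c : Σ → C(Σ), and b : Σ → Bool. Define Φ on functions f : Σ → C(Σ) by Φ(f)(σ) := f†(c(σ)) if b(σ) = true, and Φ(f)(σ) := η(σ) = ↑{δ_σ} if b(σ) = false, where f† is the Kleisli extension of f. Then Φ is Scott continuous with respect to the pointwise reverse-inclusion order (f ⊑ g iff g(σ) ⊆ f(σ) for all σ): for every nonempty family F of functions Σ → C(Σ) directed under ⊑, and every σ ∈ Σ, ∩_{f∈F} Φ(f)(σ) = Φ(τ ↦ ∩_{f∈F} f(τ))(σ). -/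
open scoped Classical
open Filter Topology

namespace DOL

/-!
If `b σ = false` both sides are `η σ`. Otherwise the claim is that `f ↦ f† (c σ)` preserves
directed intersections, and only `⊆` needs work. Given `ξ ∈ f† (c σ)` for all `f ∈ F`, the
witnesses `(μ, ν)` for `f` whose mixture is dominated by `ξ` form nonempty closed subsets of a
compact cube, decreasing along `F`; by Cantor's intersection theorem one witness serves every
`f ∈ F`, so its mixture lies in `(⋂ F)† (c σ)` below `ξ`. Finally, Kleisli extensions of
up-closed maps are up-closed: the mass that `ξ` has in excess on proper states is obtained by
moving part of the `⊥`-mass of each `ν x`, which keeps `ν x` in its up-closed target.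
-/

section Distributions

variable {X : Type*}

lemma IsDist.mem_Icc {μ : X → ℝ} (hμ : IsDist μ) (x : X) : μ x ∈ Set.Icc 0 1 :=
  ⟨hμ.1 x, le_hasSum hμ.2 x fun y _ => hμ.1 y⟩

lemma isDist_dirac_s18 (x : X) : IsDist (dirac x) :=
  ⟨fun y => by unfold dirac; split <;> norm_num, hasSum_ite_eq x 1⟩

lemma hasSum_option_iff {f : Option X → ℝ} {a : ℝ} :
    HasSum f a ↔ HasSum (fun x => f (some x)) (a - f none) := by
  have hsplit (o : Option X) :
      (if o = none then 0 else f o) + (if o = none then f none else 0) = f o := by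
    cases o <;> simp
  have hnone : HasSum f a ↔ HasSum (fun o => if o = none then 0 else f o) (a - f none) :=
    ⟨fun h => hasSum_ite_sub_hasSum h none, fun h => by
      simpa [hsplit] using h.add (hasSum_ite_eq none (f none))⟩
  rw [hnone, ← (Option.some_injective X).hasSum_iff]
  · simp [Function.comp_def]
  · rintro (_ | x) hx
    · simp
    · exact absurd ⟨x, rfl⟩ hx

lemma mem_upClo_dirac_none {ν : Option X → ℝ} : ν ∈ upClo {dirac none} ↔ IsDist ν := by
  refine ⟨fun h => h.1, fun h => ⟨h, dirac none, rfl, fun x => ?_⟩⟩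
  simpa [dirac] using h.1 (some x)

lemma IsDist.of_mem_of_upClo_eq {S : Set (Option X → ℝ)} (hS : upClo S = S)
    {ν : Option X → ℝ} (hν : ν ∈ S) : IsDist ν :=
  (hS.symm ▸ hν : ν ∈ upClo S).1

lemma upClo_biInter {ι : Type*} {I : Set ι} (hI : I.Nonempty) {T : ι → Set (Option X → ℝ)}
    (hT : ∀ i ∈ I, upClo (T i) = T i) : upClo (⋂ i ∈ I, T i) = ⋂ i ∈ I, T i := by
  ext ν
  refine ⟨fun ⟨hν, μ, hμ, hle⟩ => Set.mem_iInter₂.mpr fun i hi => ?_, fun hν => ?_⟩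
  · rw [← hT i hi]
    exact ⟨hν, μ, Set.mem_iInter₂.mp hμ i hi, hle⟩
  · obtain ⟨i, hi⟩ := hI
    exact ⟨.of_mem_of_upClo_eq (hT i hi) (Set.mem_iInter₂.mp hν i hi), ν, hν, fun _ => le_rfl⟩

end Distributions

section Mixtures

variable {X Y : Type*} {μ : Option X → ℝ} {ν : Option X → Option Y → ℝ}

lemma hasSum_mul_of_isDist (hμ : IsDist μ) (hν : ∀ x, 0 < μ x → IsDist (ν x))
    (x : Option X) : HasSum (fun y => μ x * ν x y) (μ x) := by
  rcases (hμ.1 x).lt_or_eq with h | h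
  · simpa using (hν x h).2.mul_left (μ x)
  · simp [← h, hasSum_zero]

lemma mul_nonneg_of_isDist (hμ : IsDist μ) (hν : ∀ x, 0 < μ x → IsDist (ν x))
    (x : Option X) (y : Option Y) : 0 ≤ μ x * ν x y := by
  rcases (hμ.1 x).lt_or_eq with h | h
  · exact mul_nonneg h.le ((hν x h).1 y)
  · simp [← h]

lemma summable_uncurry_mix (hμ : IsDist μ) (hν : ∀ x, 0 < μ x → IsDist (ν x)) :
    Summable (Function.uncurry fun x y => μ x * ν x y) := by
  refine (summable_prod_of_nonneg fun p => mul_nonneg_of_isDist hμ hν p.1 p.2).mpr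
    ⟨fun x => (hasSum_mul_of_isDist hμ hν x).summable, ?_⟩
  simpa only [(hasSum_mul_of_isDist hμ hν _).tsum_eq] using hμ.2.summable

lemma summable_mix (hμ : IsDist μ) (hν : ∀ x, 0 < μ x → IsDist (ν x)) (y : Option Y) :
    Summable fun x => μ x * ν x y :=
  (summable_uncurry_mix hμ hν).prod_symm.prod_factor y

lemma isDist_mix_s18 (hμ : IsDist μ) (hν : ∀ x, 0 < μ x → IsDist (ν x)) :
    IsDist fun y => ∑' x, μ x * ν x y := by
  refine ⟨fun y => tsum_nonneg fun x => mul_nonneg_of_isDist hμ hν x y,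
    (summable_uncurry_mix hμ hν).prod_symm.prod.hasSum_iff.mpr ?_⟩
  change ∑' y, ∑' x, μ x * ν x y = 1
  rw [(summable_uncurry_mix hμ hν).tsum_comm]
  simpa only [(hasSum_mul_of_isDist hμ hν _).tsum_eq] using hμ.2.tsum_eq

end Mixtures

section Kleisli

variable {X Y : Type*} {f g : X → Set (Option Y → ℝ)} {S : Set (Option X → ℝ)}

@[simp] lemma fbot_some (f : X → Set (Option Y → ℝ)) (x : X) : fbot f (some x) = f x := rfl

lemma fbot_mono (h : f ≤ g) (x : Option X) : fbot f x ⊆ fbot g x := by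
  cases x with
  | none => exact subset_rfl
  | some x => exact h x

lemma upClo_fbot (hg : ∀ x, upClo (g x) = g x) (x : Option X) :
    upClo (fbot g x) = fbot g x := by
  cases x with
  | none =>
    ext ν
    exact ⟨fun h => mem_upClo_dirac_none.mpr h.1,
      fun h => ⟨mem_upClo_dirac_none.mp h, ν, h, fun _ => le_rfl⟩⟩
  | some x => exact hg x

lemma kleisli_mono (h : f ≤ g) (S : Set (Option X → ℝ)) : kleisli f S ⊆ kleisli g S :=
  fun _ ⟨μ, hμ, ν, hν, hξ⟩ => ⟨μ, hμ, ν, fun x hx => fbot_mono h x (hν x hx), hξ⟩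

lemma isDist_of_mem_kleisli (hg : ∀ x, upClo (g x) = g x) (hS : ∀ μ ∈ S, IsDist μ)
    {ξ : Option Y → ℝ} (hξ : ξ ∈ kleisli g S) : IsDist ξ := by
  obtain ⟨μ, hμ, ν, hν, hξ⟩ := hξ
  exact funext hξ ▸ isDist_mix_s18 (hS μ hμ) fun x hx =>
    .of_mem_of_upClo_eq (upClo_fbot hg x) (hν x hx)

noncomputable def spreadBot (ν : Option Y → ℝ) (w : Y → ℝ) : Option Y → ℝ
  | none => ν none * (1 - ∑' y, w y)
  | some y => ν (some y) + ν none * w y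

lemma isDist_spreadBot {ν : Option Y → ℝ} (hν : IsDist ν) {w : Y → ℝ} (hw : ∀ y, 0 ≤ w y)
    {t : ℝ} (hwt : HasSum w t) (ht : t ≤ 1) : IsDist (spreadBot ν w) := by
  refine ⟨fun o => ?_, hasSum_option_iff.mpr ?_⟩
  · cases o with
    | none => exact mul_nonneg (hν.1 none) (by rw [hwt.tsum_eq]; linarith)
    | some y => exact add_nonneg (hν.1 _) (mul_nonneg (hν.1 none) (hw y))
  · convert (hasSum_option_iff.mp hν.2).add (hwt.mul_left (ν none)) using 1
    · rfl
    · rw [show spreadBot ν w none = ν none * (1 - t) by rw [← hwt.tsum_eq]; rfl]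
      ring

lemma dle_spreadBot {ν : Option Y → ℝ} (hν : 0 ≤ ν none) {w : Y → ℝ} (hw : ∀ y, 0 ≤ w y) :
    dle ν (spreadBot ν w) :=
  fun y => le_add_of_nonneg_right (mul_nonneg hν (hw y))

theorem upClo_kleisli_subset (hg : ∀ x, upClo (g x) = g x) (hS : ∀ μ ∈ S, IsDist μ) :
    upClo (kleisli g S) ⊆ kleisli g S := by
  rintro ξ ⟨hξ, ξ', ⟨μ, hμS, ν, hν, hξ'⟩, hle⟩
  have hμ : IsDist μ := hS μ hμS
  have hνd : ∀ x, 0 < μ x → IsDist (ν x) := fun x hx =>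
    .of_mem_of_upClo_eq (upClo_fbot hg x) (hν x hx)
  have hξ'd : IsDist ξ' := funext hξ' ▸ isDist_mix_s18 hμ hνd
  set r := ξ' none
  set d : Y → ℝ := fun y => ξ (some y) - ξ' (some y)
  have hd : ∀ y, 0 ≤ d y := fun y => sub_nonneg.mpr (hle y)
  have hdD : HasSum d (r - ξ none) := by
    simpa only [sub_sub_sub_cancel_left] using
      (hasSum_option_iff.mp hξ.2).sub (hasSum_option_iff.mp hξ'd.2)
  have hξr : ξ none ≤ r := sub_nonneg.mp (hdD.nonneg hd)
  -- `r` is the `⊥`-mass of the mixture `ξ'`, so the weights `d / r` move exactly the deficit `d`.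
  set w : Y → ℝ := fun y => d y / r
  have hw : ∀ y, 0 ≤ w y := fun y => div_nonneg (hd y) (hξ'd.1 none)
  have hwt : HasSum w ((r - ξ none) / r) := hdD.div_const r
  have hrw : ∀ y, r * w y = d y := by
    intro y
    rcases eq_or_ne r 0 with hr | hr
    · have : d y ≤ r - ξ none := le_hasSum hdD y fun j _ => hd j
      have : d y = 0 := by linarith [hd y, hξ.1 none]
      simp [w, hr, this]
    · exact mul_div_cancel₀ _ hr
  have hrt : r * (1 - ∑' y, w y) = ξ none := by
    rw [hwt.tsum_eq]
    rcases eq_or_ne r 0 with hr | hr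
    · simp [hr, le_antisymm (hr ▸ hξr) (hξ.1 none)]
    · field_simp
      ring
  refine ⟨μ, hμS, fun x => spreadBot (ν x) w, fun x hx => ?_, fun y => ?_⟩
  · rw [← upClo_fbot hg x]
    exact ⟨isDist_spreadBot (hνd x hx) hw hwt
      (div_le_one_of_le₀ (by linarith [hξ.1 none]) (hξ'd.1 none)),
      ν x, hν x hx, dle_spreadBot ((hνd x hx).1 none) hw⟩
  cases y with
  | none =>
    calc ξ none = (∑' x, μ x * ν x none) * (1 - ∑' y, w y) := by rw [← hξ' none, hrt]
      _ = ∑' x, μ x * spreadBot (ν x) w none := by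
        rw [← tsum_mul_right]
        simp only [spreadBot, mul_assoc]
  | some y =>
    calc ξ (some y) = ξ' (some y) + r * w y := by rw [hrw]; ring
      _ = ∑' x, (μ x * ν x (some y) + μ x * ν x none * w y) := by
        rw [(summable_mix hμ hνd _).tsum_add ((summable_mix hμ hνd none).mul_right _),
          tsum_mul_right, ← hξ', ← hξ']
      _ = ∑' x, μ x * spreadBot (ν x) w (some y) := by
        simp only [spreadBot, mul_add, mul_assoc]

/-- Domination of `ξ`, unlike equality with it, is a closed condition (tested on finite partial
sums), and pinning `ν none` keeps these witnesses inside a product of unit intervals. -/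
def witnessesBelow (f : X → Set (Option Y → ℝ)) (S : Set (Option X → ℝ))
    (ξ : Option Y → ℝ) : Set ((Option X → ℝ) × (Option X → Option Y → ℝ)) :=
  {p | p.1 ∈ S ∧ (∀ x, p.2 (some x) ∈ f x) ∧ p.2 none = dirac none ∧
    ∀ (y : Y) (s : Finset (Option X)), ∑ x ∈ s, p.1 x * p.2 x (some y) ≤ ξ (some y)}

variable {ξ : Option Y → ℝ}

lemma witnessesBelow_mono (h : f ≤ g) : witnessesBelow f S ξ ⊆ witnessesBelow g S ξ :=
  fun _ ⟨hS, hf, hnone, hle⟩ => ⟨hS, fun x => h x (hf x), hnone, hle⟩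

lemma isDist_of_mem_witnessesBelow (hf : ∀ x, upClo (f x) = f x) (hS : ∀ μ ∈ S, IsDist μ)
    {p : (Option X → ℝ) × (Option X → Option Y → ℝ)} (hp : p ∈ witnessesBelow f S ξ) :
    IsDist p.1 ∧ ∀ x, IsDist (p.2 x) := by
  refine ⟨hS _ hp.1, fun x => ?_⟩
  cases x with
  | none => exact hp.2.2.1 ▸ isDist_dirac_s18 none
  | some x => exact .of_mem_of_upClo_eq (hf x) (hp.2.1 x)

lemma isClosed_witnessesBelow (hfc : ∀ x, IsClosed (f x)) (hSc : IsClosed S) :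
    IsClosed (witnessesBelow f S ξ) := by
  simp only [witnessesBelow, Set.ofPred_and, Set.ofPred_forall]
  refine (hSc.preimage continuous_fst).inter ((isClosed_iInter fun x =>
    (hfc x).preimage (by fun_prop)).inter ((isClosed_eq (by fun_prop) continuous_const).inter
      (isClosed_iInter fun y => isClosed_iInter fun s =>
        isClosed_le (by fun_prop) continuous_const)))

lemma isCompact_witnessesBelow (hf : ∀ x, upClo (f x) = f x) (hfc : ∀ x, IsClosed (f x))
    (hS : ∀ μ ∈ S, IsDist μ) (hSc : IsClosed S) : IsCompact (witnessesBelow f S ξ) := by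
  have hcube : IsCompact ((Set.univ.pi fun _ => Set.Icc 0 1) ×ˢ
      (Set.univ.pi fun _ => Set.univ.pi fun _ => Set.Icc 0 1) :
        Set ((Option X → ℝ) × (Option X → Option Y → ℝ))) :=
    (isCompact_univ_pi fun _ => isCompact_Icc).prod
      (isCompact_univ_pi fun _ => isCompact_univ_pi fun _ => isCompact_Icc)
  refine hcube.of_isClosed_subset (isClosed_witnessesBelow hfc hSc) fun p hp => ?_
  obtain ⟨hμ, hν⟩ := isDist_of_mem_witnessesBelow hf hS hp
  exact ⟨fun x _ => hμ.mem_Icc x, fun x _ y _ => (hν x).mem_Icc y⟩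

lemma witnessesBelow_nonempty (hf : ∀ x, upClo (f x) = f x) (hfne : ∀ x, (f x).Nonempty)
    (hS : ∀ μ ∈ S, IsDist μ) (hξ : ξ ∈ kleisli f S) : (witnessesBelow f S ξ).Nonempty := by
  obtain ⟨μ, hμS, ν, hν, hξ⟩ := hξ
  have hμ : IsDist μ := hS μ hμS
  have hνd : ∀ x, 0 < μ x → IsDist (ν x) := fun x hx =>
    .of_mem_of_upClo_eq (upClo_fbot hf x) (hν x hx)
  let ν' : Option X → Option Y → ℝ
    | none => dirac none
    | some x => if 0 < μ (some x) then ν (some x) else (hfne x).some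
  have hterm : ∀ x y, μ x * ν' x (some y) ≤ μ x * ν x (some y) := by
    rintro (_ | x) y
    · simpa [ν', dirac] using mul_nonneg_of_isDist hμ hνd none (some y)
    · by_cases hx : 0 < μ (some x)
      · simp [ν', hx]
      · simp [le_antisymm (not_lt.mp hx) (hμ.1 _)]
  refine ⟨(μ, ν'), hμS, fun x => ?_, rfl, fun y s => ?_⟩
  · by_cases hx : 0 < μ (some x)
    · simpa [ν', hx] using hν (some x) hx
    · simpa [ν', hx] using (hfne x).some_mem
  · calc ∑ x ∈ s, μ x * ν' x (some y) ≤ ∑ x ∈ s, μ x * ν x (some y) :=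
          Finset.sum_le_sum fun x _ => hterm x y
      _ ≤ ∑' x, μ x * ν x (some y) := (summable_mix hμ hνd _).sum_le_tsum s
          fun x _ => mul_nonneg_of_isDist hμ hνd x _
      _ = ξ (some y) := (hξ _).symm

lemma mem_kleisli_of_witnessesBelow_nonempty (hg : ∀ x, upClo (g x) = g x)
    (hS : ∀ μ ∈ S, IsDist μ) (hξ : IsDist ξ) (hW : (witnessesBelow g S ξ).Nonempty) :
    ξ ∈ kleisli g S := by
  obtain ⟨⟨μ, ν⟩, hp⟩ := hW
  obtain ⟨hμ, hν⟩ := isDist_of_mem_witnessesBelow hg hS hp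
  obtain ⟨hμS, hνg, -, hle⟩ := hp
  have hνfbot : ∀ x, ν x ∈ fbot g x := by
    rintro (_ | x)
    · exact mem_upClo_dirac_none.mpr (hν none)
    · exact hνg x
  refine upClo_kleisli_subset hg hS ⟨hξ, fun y => ∑' x, μ x * ν x y,
    ⟨μ, hμS, ν, fun x _ => hνfbot x, fun _ => rfl⟩, fun y => ?_⟩
  exact Real.tsum_le_of_sum_le (fun x => mul_nonneg_of_isDist hμ (fun x _ => hν x) x _) (hle y)

theorem biInter_kleisli (hS : ∀ μ ∈ S, IsDist μ) (hSc : IsClosed S)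
    {F : Set (X → Set (Option Y → ℝ))} (hne : F.Nonempty) (hdir : DirectedOn (· ≥ ·) F)
    (hFne : ∀ f ∈ F, ∀ x, (f x).Nonempty) (hFc : ∀ f ∈ F, ∀ x, IsClosed (f x))
    (hFup : ∀ f ∈ F, ∀ x, upClo (f x) = f x) :
    ⋂ f ∈ F, kleisli f S = kleisli (fun x => ⋂ f ∈ F, f x) S := by
  refine subset_antisymm (fun ξ hξ => ?_) (Set.subset_iInter₂ fun f hf =>
    kleisli_mono (fun x => Set.biInter_subset_of_mem hf) S)
  rw [Set.mem_iInter₂] at hξ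
  obtain ⟨f₀, hf₀⟩ := hne
  have : Nonempty F := ⟨⟨f₀, hf₀⟩⟩
  obtain ⟨p, hp⟩ := IsCompact.nonempty_iInter_of_directed_nonempty_isCompact_isClosed
    (fun f : F => witnessesBelow f.1 S ξ)
    (hdir.directed_val.mono_comp (g := fun f => witnessesBelow f S ξ) (rb := (· ⊇ ·)) _
      fun _ _ h => witnessesBelow_mono h)
    (fun f => witnessesBelow_nonempty (hFup f f.2) (hFne f f.2) hS (hξ f f.2))
    (fun f => isCompact_witnessesBelow (hFup f f.2) (hFc f f.2) hS hSc)
    (fun f => isClosed_witnessesBelow (hFc f f.2) hSc)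
  rw [Set.mem_iInter] at hp
  obtain ⟨hpS, -, hpnone, hple⟩ := hp ⟨f₀, hf₀⟩
  refine mem_kleisli_of_witnessesBelow_nonempty
    (fun x => upClo_biInter ⟨f₀, hf₀⟩ fun f hf => hFup f hf x) hS
    (isDist_of_mem_kleisli (hFup f₀ hf₀) hS (hξ f₀ hf₀)) ⟨p, hpS, fun x => ?_, hpnone, hple⟩
  exact Set.mem_iInter₂.mpr fun f hf => (hp ⟨f, hf⟩).2.1 x

end Kleisli

theorem Phi_scott_continuous_general {St : Type*}
    (c : St → Set (Option St → ℝ)) (hc : ∀ σ, memC (c σ)) (b : St → Bool)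
    (F : Set (St → Set (Option St → ℝ))) (hne : F.Nonempty)
    (hmem : ∀ f ∈ F, ∀ σ, memC (f σ))
    (hdir : ∀ f ∈ F, ∀ g ∈ F, ∃ h ∈ F, (∀ σ, h σ ⊆ f σ) ∧ (∀ σ, h σ ⊆ g σ))
    (σ : St) :
    (⋂ f ∈ F, Phi c b f σ) = Phi c b (fun τ => ⋂ f ∈ F, f τ) σ := by
  cases hb : b σ
  · simp only [Phi, hb, Bool.false_eq_true, if_false]
    exact Set.biInter_const hne _
  · simp only [Phi, hb, if_true]
    exact biInter_kleisli (hc σ).2.1 (hc σ).2.2.2.1 hne hdir (fun f hf x => (hmem f hf x).1)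
      (fun f hf x => (hmem f hf x).2.2.2.1) (fun f hf x => (hmem f hf x).2.2.2.2)

/-- Scott continuity of the loop characteristic functional:
for a directed family `F` (pointwise reverse inclusion),
`⋂_{f∈F} Φ(f)(σ) = Φ(τ ↦ ⋂_{f∈F} f(τ))(σ)`. -/
theorem Phi_scott_continuous {St : Type*} [Countable St]
    (c : St → Set (Option St → ℝ)) (hc : ∀ σ, memC (c σ)) (b : St → Bool)
    (F : Set (St → Set (Option St → ℝ))) (hne : F.Nonempty)
    (hmem : ∀ f ∈ F, ∀ σ, memC (f σ))
    (hdir : ∀ f ∈ F, ∀ g ∈ F, ∃ h ∈ F, (∀ σ, h σ ⊆ f σ) ∧ (∀ σ, h σ ⊆ g σ))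
    (σ : St) :
    (⋂ f ∈ F, Phi c b f σ) = Phi c b (fun τ => ⋂ f ∈ F, f τ) σ :=
  Phi_scott_continuous_general c hc b F hne hmem hdir σ

end DOL
end
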